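/- arXiv:math-ph/0504041 — 3 statements merged into one kernel-verified Lean document; each statement's English description precedes it below -/
import Mathlib

section
/- The function M(w) = ∫_ℝ e^{w y} Ai(β + y) dy satisfies the first-order ODE M'(w) = (w² − β) M(w) for w > 0. -/
open MeasureTheory Real Filter
open Set Topology

section AiryAux

-- elementary inequality
lemma airyAux_abs_exp {c : ℝ} (hc : 0 < c) (y : ℝ) :
    |y| * Real.exp (c * y) ≤ max 1 (2/c) * (Real.exp ((c/2) * y) + Real.exp ((c+1) * y)) := by
  have hK1 : (1:ℝ) ≤ max 1 (2/c) := le_max_left _ _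
  have hK2 : (2/c : ℝ) ≤ max 1 (2/c) := le_max_right _ _
  rcases le_or_gt 0 y with hy | hy
  · have h1 : |y| = y := abs_of_nonneg hy
    have h2 : y ≤ Real.exp y := (Real.add_one_le_exp y).trans' (by linarith)
    calc |y| * Real.exp (c * y) ≤ Real.exp y * Real.exp (c * y) := by
          rw [h1]; exact mul_le_mul_of_nonneg_right h2 (Real.exp_pos _).le
      _ = Real.exp ((c+1) * y) := by rw [← Real.exp_add]; ring_nf
      _ ≤ 1 * (Real.exp ((c/2) * y) + Real.exp ((c+1) * y)) := by
          nlinarith [Real.exp_pos ((c/2)*y)]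
      _ ≤ max 1 (2/c) * (Real.exp ((c/2) * y) + Real.exp ((c+1) * y)) := by
          apply mul_le_mul_of_nonneg_right hK1
          positivity
  · have h1 : |y| = -y := abs_of_neg hy
    have h2 : c/2 * (-y) ≤ Real.exp (c/2 * (-y)) := by
      have := Real.add_one_le_exp (c/2 * (-y)); linarith
    have heq : Real.exp (c/2 * (-y)) = Real.exp (-(c/2*y)) := by ring_nf
    have h3 : -y ≤ 2/c * Real.exp (-(c/2 * y)) := by
      rw [heq] at h2
      have h4 := mul_le_mul_of_nonneg_left h2 (le_of_lt (by positivity : (0:ℝ) < 2/c))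
      calc -y = 2/c * (c/2 * (-y)) := by field_simp
        _ ≤ 2/c * Real.exp (-(c/2*y)) := h4
    calc |y| * Real.exp (c*y) ≤ (2/c * Real.exp (-(c/2*y))) * Real.exp (c*y) := by
          rw [h1]; exact mul_le_mul_of_nonneg_right h3 (Real.exp_pos _).le
      _ = 2/c * Real.exp ((c/2) * y) := by
          rw [mul_assoc, ← Real.exp_add]; ring_nf
      _ ≤ max 1 (2/c) * (Real.exp ((c/2) * y) + Real.exp ((c+1) * y)) := by
          have := Real.exp_pos ((c+1)*y)
          have := Real.exp_pos ((c/2)*y)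
          nlinarith [le_trans (by positivity : (0:ℝ) ≤ 2/c) hK2]
    

lemma airyAux_exp_mul_Iic {b : ℝ} (hb : 0 < b) :
    IntegrableOn (fun y => Real.exp (b * y)) (Iic (0:ℝ)) := by
  refine integrableOn_Iic_of_intervalIntegral_norm_bounded (1/b) 0
    (fun y => ((Real.continuous_exp.comp (continuous_const.mul continuous_id)).integrableOn_Ioc))
    tendsto_id (Eventually.of_forall fun y => ?_)
  have h1 : ∀ t : ℝ, ‖Real.exp (b * t)‖ = Real.exp (b * t) := fun t => norm_of_nonneg (Real.exp_pos _).le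
  simp_rw [h1]
  show ∫ t in y..0, Real.exp (b * t) ≤ 1/b
  have h2 : ∫ t in y..0, Real.exp (b * t) = b⁻¹ • ∫ t in b*y..b*0, Real.exp t := by
    rw [← intervalIntegral.integral_comp_mul_left _ (ne_of_gt hb)]
  rw [h2, integral_exp]
  rw [smul_eq_mul]
  have := Real.exp_pos (b*y)
  have h3 : Real.exp (b*0) = 1 := by norm_num
  rw [h3]
  rw [one_div]
  have hbinv : (0:ℝ) < b⁻¹ := by positivity
  nlinarith

lemma airyAux_no_limit (f : ℝ → ℝ) (hd : Differentiable ℝ f) (hcd : Continuous (deriv f))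
    (hfi : IntegrableOn (fun y => |f y|) (Ici (0:ℝ)))
    {L : ℝ} (hL : 0 < L) (ht : Tendsto (deriv f) atTop (𝓝 L)) : False := by
  have h1 : ∀ᶠ x in atTop, L/2 < deriv f x := ht.eventually (eventually_gt_nhds (by linarith))
  obtain ⟨x₀, hx₀⟩ := eventually_atTop.1 (h1.and (eventually_ge_atTop 0))
  have key : ∀ x, x₀ ≤ x → f x₀ + L/2 * (x - x₀) ≤ f x := by
    intro x hx
    have hftc : ∫ t in x₀..x, deriv f t = f x - f x₀ :=
      intervalIntegral.integral_deriv_eq_sub (fun t _ => hd t)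
        (hcd.intervalIntegrable _ _)
    have hci : IntervalIntegrable (fun _ : ℝ => L/2) volume x₀ x :=
      intervalIntegrable_const
    have hmono := intervalIntegral.integral_mono_on hx hci (hcd.intervalIntegrable x₀ x)
      (fun t htt => le_of_lt (hx₀ t htt.1).1)
    rw [hftc, intervalIntegral.integral_const, smul_eq_mul] at hmono
    nlinarith
  set x₁ := max x₀ (x₀ + (2/L) * (1 + |f x₀|)) with hx₁def
  have hx₁0 : (0:ℝ) ≤ x₁ := le_trans (hx₀ x₀ le_rfl).2 (le_max_left _ _)
  have hge : ∀ x, x₁ ≤ x → 1 ≤ |f x| := by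
    intro x hx
    have h₁ := key x (le_trans (le_max_left _ _) hx)
    have h₂ : x₀ + (2/L)*(1+|f x₀|) ≤ x := le_trans (le_max_right _ _) hx
    have h₃ : L/2 * ((2/L)*(1+|f x₀|)) ≤ L/2 * (x - x₀) :=
      mul_le_mul_of_nonneg_left (by linarith) (by positivity)
    have h₄ : L/2 * ((2/L)*(1+|f x₀|)) = 1 + |f x₀| := by field_simp
    have h₅ : 1 ≤ f x := by
      have := neg_abs_le (f x₀); linarith
    linarith [le_abs_self (f x)]
  have hconst : IntegrableOn (fun _ : ℝ => (1:ℝ)) (Ici x₁) := by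
    apply Integrable.mono' (hfi.mono_set (Ici_subset_Ici.mpr hx₁0)) aestronglyMeasurable_const
    refine (ae_restrict_iff' measurableSet_Ici).2 (ae_of_all _ fun x hx => ?_)
    simpa using hge x hx
  have hcc := (integrableOn_const_iff (C := (1:ℝ))).1 hconst
  simp [Real.volume_Ici] at hcc

lemma airyAux_deriv_decay (f : ℝ → ℝ) (hsm : ContDiff ℝ (⊤ : ℕ∞) f)
    (hODE : ∀ x : ℝ, deriv (deriv f) x = x * f x)
    (hf : ∀ c > (0:ℝ), Integrable fun y : ℝ => Real.exp (c * y) * f y) :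
    ∀ c > (0:ℝ), Integrable fun y : ℝ => Real.exp (c * y) * deriv f y := by
  have hsm2 : ContDiff ℝ (⊤:ℕ∞) f := hsm.of_le (mod_cast le_top)
  have hd : Differentiable ℝ f := hsm2.differentiable (by simp)
  have hsm' : ContDiff ℝ (⊤:ℕ∞) (deriv f) := (contDiff_infty_iff_deriv.mp hsm2).2
  have hd' : Differentiable ℝ (deriv f) := hsm'.differentiable (by simp)
  have hcd : Continuous (deriv f) := hsm'.continuous
  have hcdd : Continuous (deriv (deriv f)) := by
    have h : deriv (deriv f) = fun x => x * f x := funext hODE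
    rw [h]; exact continuous_id.mul hsm.continuous
  have habs : ∀ c > (0:ℝ), Integrable fun y : ℝ => Real.exp (c * y) * |f y| := by
    intro c hc
    exact ((hf c hc).abs).congr (ae_of_all _ fun y => by
      simp only [abs_mul, abs_of_pos (Real.exp_pos _)])
  have hpoly : ∀ c > (0:ℝ), Integrable fun y : ℝ => |y| * (Real.exp (c * y) * |f y|) := by
    intro c hc
    have hg : Integrable fun y : ℝ =>
        max 1 (2/c) * (Real.exp ((c/2) * y) * |f y| + Real.exp ((c+1) * y) * |f y|) :=
      ((habs (c/2) (by positivity)).add (habs (c+1) (by positivity))).const_mul _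
    refine hg.mono' (Continuous.aestronglyMeasurable (by fun_prop)) (ae_of_all _ fun y => ?_)
    have h := mul_le_mul_of_nonneg_right (airyAux_abs_exp hc y) (abs_nonneg (f y))
    have hn : ‖|y| * (Real.exp (c * y) * |f y|)‖ = |y| * (Real.exp (c * y) * |f y|) :=
      norm_of_nonneg (by positivity)
    rw [hn]; nlinarith [abs_nonneg (f y), Real.exp_pos ((c/2) * y), Real.exp_pos ((c+1) * y)]
  have hfIci : IntegrableOn (fun y : ℝ => |f y|) (Ici (0:ℝ)) := by
    refine Integrable.mono' ((habs 1 one_pos).restrict (s := Ici 0))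
      (Continuous.aestronglyMeasurable (by fun_prop)).restrict
      ((ae_restrict_iff' measurableSet_Ici).2 (ae_of_all _ fun y hy => ?_))
    have h1 : (1:ℝ) ≤ Real.exp (1 * y) := Real.one_le_exp (by simpa using hy)
    have : ‖|f y|‖ = |f y| := norm_of_nonneg (abs_nonneg _)
    rw [this]
    exact le_mul_of_one_le_left (abs_nonneg _) h1
  have htail : IntegrableOn (fun t : ℝ => t * f t) (Ioi (0:ℝ)) := by
    refine Integrable.mono' ((hpoly 1 one_pos).restrict (s := Ioi 0))
      (Continuous.aestronglyMeasurable (by fun_prop)).restrict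
      ((ae_restrict_iff' measurableSet_Ioi).2 (ae_of_all _ fun t ht => ?_))
    have h1 : (1:ℝ) ≤ Real.exp (1 * t) := Real.one_le_exp (by simp; exact (le_of_lt ht))
    rw [norm_eq_abs, abs_mul]
    exact mul_le_mul_of_nonneg_left (le_mul_of_one_le_left (abs_nonneg _) h1) (abs_nonneg t)
  have hFTC : ∀ x : ℝ, deriv f x = deriv f 0 + ∫ t in (0:ℝ)..x, t * f t := by
    intro x
    have h3 : ∫ t in (0:ℝ)..x, deriv (deriv f) t = deriv f x - deriv f 0 :=
      intervalIntegral.integral_deriv_eq_sub (fun t _ => hd' t) (hcdd.intervalIntegrable _ _)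
    have h4 : ∫ t in (0:ℝ)..x, deriv (deriv f) t = ∫ t in (0:ℝ)..x, t * f t :=
      intervalIntegral.integral_congr fun t _ => hODE t
    linarith
  have hLt : Tendsto (deriv f) atTop (𝓝 (deriv f 0 + ∫ t in Ioi 0, t * f t)) := by
    have h1 : Tendsto (fun x : ℝ => ∫ t in (0:ℝ)..x, t * f t) atTop
        (𝓝 (∫ t in Ioi 0, t * f t)) :=
      intervalIntegral_tendsto_integral_Ioi 0 htail tendsto_id
    exact Tendsto.congr (fun x => (hFTC x).symm) (tendsto_const_nhds.add h1)
  have hL0 : deriv f 0 + (∫ t in Ioi 0, t * f t) = 0 := by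
    by_contra h0
    rcases lt_or_gt_of_ne h0 with hneg | hpos
    · refine airyAux_no_limit (fun y => -f y) hd.neg ?_ ?_
        (L := -(deriv f 0 + ∫ t in Ioi 0, t * f t)) (by linarith) ?_
      · have h : deriv (fun y => -f y) = fun y => -deriv f y := funext fun y => deriv.neg
        rw [h]; exact hcd.neg
      · exact hfIci.congr (ae_of_all _ fun y => by simp)
      · have h : deriv (fun y => -f y) = fun y => -deriv f y := funext fun y => deriv.neg
        rw [h]; exact hLt.neg
    · exact airyAux_no_limit f hd hcd hfIci hpos hLt
  have hrep : ∀ x : ℝ, 0 ≤ x → deriv f x = -∫ t in Ioi x, t * f t := by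
    intro x hx
    have hsplit : (∫ t in Ioi (0:ℝ), t * f t)
        = (∫ t in Ioc 0 x, t * f t) + ∫ t in Ioi x, t * f t := by
      rw [← setIntegral_union (Ioc_disjoint_Ioi le_rfl) measurableSet_Ioi
        (htail.mono_set Ioc_subset_Ioi_self) (htail.mono_set (Ioi_subset_Ioi hx)),
        Ioc_union_Ioi_eq_Ioi hx]
    have hIoc : ∫ t in (0:ℝ)..x, t * f t = ∫ t in Ioc 0 x, t * f t :=
      intervalIntegral.integral_of_le hx
    have h2 := hFTC x
    rw [hIoc] at h2
    linarith
  have hbound_pos : ∀ b > (0:ℝ), ∃ C : ℝ, ∀ x : ℝ, 0 ≤ x →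
      |deriv f x| ≤ C * Real.exp (-(b * x)) := by
    intro b hb
    have hEint : IntegrableOn (fun t : ℝ => Real.exp (b * t) * (|t| * |f t|)) (Ioi 0) :=
      (((hpoly b hb).congr (ae_of_all _ fun t => by ring)).restrict (s := Ioi 0))
    refine ⟨∫ t in Ioi 0, Real.exp (b * t) * (|t| * |f t|), fun x hx => ?_⟩
    rw [hrep x hx, abs_neg]
    have habsle : |∫ t in Ioi x, t * f t| ≤ ∫ t in Ioi x, |t * f t| := by
      simpa only [Real.norm_eq_abs] using
        norm_integral_le_integral_norm (μ := volume.restrict (Ioi x)) (fun t => t * f t)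
    calc |∫ t in Ioi x, t * f t| ≤ ∫ t in Ioi x, |t * f t| := habsle
      _ ≤ ∫ t in Ioi x, Real.exp (b * (t - x)) * (|t| * |f t|) := by
          have hE2 : IntegrableOn (fun t => Real.exp (b*(t-x)) * (|t| * |f t|)) (Ioi x) := by
            refine (((hEint.mono_set (Ioi_subset_Ioi hx)).const_mul
              (Real.exp (-(b*x)))).congr (ae_of_all _ fun t => ?_))
            simp only [← mul_assoc, ← Real.exp_add]; ring_nf
          apply setIntegral_mono_on ((htail.mono_set (Ioi_subset_Ioi hx)).abs) hE2
            measurableSet_Ioi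
          intro t ht
          have h1 : (1:ℝ) ≤ Real.exp (b * (t - x)) :=
            Real.one_le_exp (by nlinarith [mem_Ioi.mp ht])
          rw [abs_mul]
          exact le_mul_of_one_le_left (by positivity) h1
      _ = Real.exp (-(b * x)) * ∫ t in Ioi x, Real.exp (b * t) * (|t| * |f t|) := by
          rw [← integral_const_mul]
          exact setIntegral_congr_fun measurableSet_Ioi (fun t _ => by
            rw [show Real.exp (b*(t-x)) = Real.exp (-(b*x)) * Real.exp (b*t) by
              rw [← Real.exp_add]; ring_nf, mul_assoc])
      _ ≤ Real.exp (-(b * x)) * ∫ t in Ioi 0, Real.exp (b * t) * (|t| * |f t|) := by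
          apply mul_le_mul_of_nonneg_left _ (Real.exp_pos _).le
          exact setIntegral_mono_set hEint (ae_of_all _ fun t => by positivity)
            (HasSubset.Subset.eventuallyLE (Ioi_subset_Ioi hx))
      _ = (∫ t in Ioi 0, Real.exp (b * t) * (|t| * |f t|)) * Real.exp (-(b * x)) :=
          mul_comm _ _
  have hbound_neg : ∀ b > (0:ℝ), ∃ C : ℝ, ∀ x : ℝ, x ≤ 0 →
      |deriv f x| ≤ C * Real.exp (-(b * x)) := by
    intro b hb
    have hIint : IntegrableOn (fun t : ℝ => Real.exp (b * t) * (|t| * |f t|)) (Iic 0) :=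
      (((hpoly b hb).congr (ae_of_all _ fun t => by ring)).restrict (s := Iic 0))
    refine ⟨|deriv f 0| + ∫ t in Iic 0, Real.exp (b * t) * (|t| * |f t|), fun x hx => ?_⟩
    have hFTCx := hFTC x
    have hswap : ∫ t in (0:ℝ)..x, t * f t = -∫ t in Ioc x 0, t * f t := by
      rw [intervalIntegral.integral_symm, intervalIntegral.integral_of_le hx]
    have hcont : IntegrableOn (fun t : ℝ => t * f t) (Ioc x 0) :=
      (continuous_id.mul hsm.continuous).integrableOn_Ioc
    have h5 : |∫ t in Ioc x 0, t * f t|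
        ≤ Real.exp (-(b * x)) * ∫ t in Iic 0, Real.exp (b * t) * (|t| * |f t|) := by
      calc |∫ t in Ioc x 0, t * f t| ≤ ∫ t in Ioc x 0, |t * f t| := by
            simpa only [Real.norm_eq_abs] using
              norm_integral_le_integral_norm (μ := volume.restrict (Ioc x 0)) (fun t => t * f t)
        _ ≤ ∫ t in Ioc x 0, Real.exp (-(b*x)) * (Real.exp (b * t) * (|t| * |f t|)) := by
            apply setIntegral_mono_on hcont.abs
            · exact ((hIint.mono_set Ioc_subset_Iic_self).const_mul _)
            · exact measurableSet_Ioc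
            · intro t ht
              have h1 : (1:ℝ) ≤ Real.exp (-(b*x)) * Real.exp (b * t) := by
                rw [← Real.exp_add]
                exact Real.one_le_exp (by nlinarith [ht.1])
              rw [abs_mul, ← mul_assoc]
              exact le_mul_of_one_le_left (by positivity) h1
        _ = Real.exp (-(b*x)) * ∫ t in Ioc x 0, Real.exp (b * t) * (|t| * |f t|) := by
            rw [← integral_const_mul]
        _ ≤ Real.exp (-(b*x)) * ∫ t in Iic 0, Real.exp (b * t) * (|t| * |f t|) := by
            apply mul_le_mul_of_nonneg_left _ (Real.exp_pos _).le
            exact setIntegral_mono_set hIint (ae_of_all _ fun t => by positivity)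
              (HasSubset.Subset.eventuallyLE Ioc_subset_Iic_self)
    have h6 : (1:ℝ) ≤ Real.exp (-(b*x)) := Real.one_le_exp (by nlinarith)
    have h7 : |deriv f x| ≤ |deriv f 0| + |∫ t in Ioc x 0, t * f t| := by
      rw [hFTCx, hswap]
      calc |deriv f 0 + -∫ t in Ioc x 0, t * f t|
          ≤ |deriv f 0| + |-∫ t in Ioc x 0, t * f t| := abs_add_le _ _
        _ = |deriv f 0| + |∫ t in Ioc x 0, t * f t| := by rw [abs_neg]
    calc |deriv f x| ≤ |deriv f 0| + |∫ t in Ioc x 0, t * f t| := h7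
      _ ≤ |deriv f 0| * Real.exp (-(b*x))
          + Real.exp (-(b*x)) * ∫ t in Iic 0, Real.exp (b * t) * (|t| * |f t|) :=
          add_le_add (le_mul_of_one_le_right (abs_nonneg _) h6) h5
      _ = (|deriv f 0| + ∫ t in Iic 0, Real.exp (b * t) * (|t| * |f t|))
          * Real.exp (-(b*x)) := by ring
  intro c hc
  obtain ⟨C₁, hC₁⟩ := hbound_pos (c+1) (by positivity)
  obtain ⟨C₂, hC₂⟩ := hbound_neg (c/2) (by positivity)
  have hmeas : AEStronglyMeasurable (fun y : ℝ => Real.exp (c * y) * deriv f y) volume :=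
    ((Real.continuous_exp.comp (continuous_const.mul continuous_id)).mul hcd).aestronglyMeasurable
  have hIoi : IntegrableOn (fun y : ℝ => Real.exp (c * y) * deriv f y) (Ioi 0) := by
    apply Integrable.mono'
      (g := fun y : ℝ => C₁ * Real.exp (-1 * y))
      (((exp_neg_integrableOn_Ioi 0 one_pos).const_mul C₁)) hmeas.restrict
    refine (ae_restrict_iff' measurableSet_Ioi).2 (ae_of_all _ fun y hy => ?_)
    have h1 := hC₁ y (le_of_lt (mem_Ioi.mp hy))
    rw [norm_eq_abs, abs_mul, abs_of_pos (Real.exp_pos _)]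
    calc Real.exp (c*y) * |deriv f y| ≤ Real.exp (c*y) * (C₁ * Real.exp (-((c+1)*y))) :=
          mul_le_mul_of_nonneg_left h1 (Real.exp_pos _).le
      _ = C₁ * Real.exp (-1 * y) := by
          rw [mul_comm (Real.exp (c*y)), mul_assoc, ← Real.exp_add]; ring_nf
  have hIic : IntegrableOn (fun y : ℝ => Real.exp (c * y) * deriv f y) (Iic 0) := by
    apply Integrable.mono'
      (g := fun y : ℝ => C₂ * Real.exp ((c/2) * y))
      ((airyAux_exp_mul_Iic (by positivity : (0:ℝ) < c/2)).const_mul C₂) hmeas.restrict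
    refine (ae_restrict_iff' measurableSet_Iic).2 (ae_of_all _ fun y hy => ?_)
    have h1 := hC₂ y (mem_Iic.mp hy)
    rw [norm_eq_abs, abs_mul, abs_of_pos (Real.exp_pos _)]
    calc Real.exp (c*y) * |deriv f y| ≤ Real.exp (c*y) * (C₂ * Real.exp (-((c/2)*y))) :=
          mul_le_mul_of_nonneg_left h1 (Real.exp_pos _).le
      _ = C₂ * Real.exp ((c/2) * y) := by
          rw [mul_comm (Real.exp (c*y)), mul_assoc, ← Real.exp_add]; ring_nf
  have hu := hIic.union hIoi
  rw [Iic_union_Ioi] at hu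
  exact integrableOn_univ.mp hu

lemma airyAux_poly' (g : ℝ → ℝ) (hgc : Continuous g)
    (habs : ∀ c > (0:ℝ), Integrable fun y : ℝ => Real.exp (c * y) * |g y|) :
    ∀ c > (0:ℝ), Integrable fun y : ℝ => |y| * (Real.exp (c * y) * |g y|) := by
  intro c hc
  have hg : Integrable fun y : ℝ =>
      max 1 (2/c) * (Real.exp ((c/2) * y) * |g y| + Real.exp ((c+1) * y) * |g y|) :=
    ((habs (c/2) (by positivity)).add (habs (c+1) (by positivity))).const_mul _
  refine hg.mono' (Continuous.aestronglyMeasurable (by fun_prop)) (ae_of_all _ fun y => ?_)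
  have h := mul_le_mul_of_nonneg_right (airyAux_abs_exp hc y) (abs_nonneg (g y))
  have hn : ‖|y| * (Real.exp (c * y) * |g y|)‖ = |y| * (Real.exp (c * y) * |g y|) :=
    norm_of_nonneg (by positivity)
  rw [hn]; nlinarith [abs_nonneg (g y), Real.exp_pos ((c/2) * y), Real.exp_pos ((c+1) * y)]

end AiryAux

/-- The function `M(w) = ∫_ℝ e^{w y} Ai(β + y) dy` satisfies the
first-order ODE `M'(w) = (w² − β) M(w)` for `w > 0`, where `Ai` is the Airy
function (`Ai'' = x · Ai`, super-exponentially decaying at `+∞`). -/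
theorem airy_integral_ODE
    (Ai : ℝ → ℝ)
    (hsmooth : ContDiff ℝ (⊤ : ℕ∞) Ai)
    (hODE : ∀ x : ℝ, deriv (deriv Ai) x = x * Ai x)
    (hdecay : ∀ c : ℝ, IntegrableOn (fun y : ℝ => Real.exp (c * y) * |Ai y|)
      (Set.Ici (0 : ℝ)))
    (hint : ∀ c > (0:ℝ), Integrable (fun y : ℝ => Real.exp (c * y) * Ai y))
    (β : ℝ) (M : ℝ → ℝ)
    (hM : ∀ w : ℝ, M w = ∫ y : ℝ, Real.exp (w * y) * Ai (β + y))
    (w : ℝ) (hw : 0 < w) :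
    HasDerivAt M ((w ^ 2 - β) * M w) w := by
  have hcA : Continuous Ai := hsmooth.continuous
  have hsm2 : ContDiff ℝ (⊤:ℕ∞) Ai := hsmooth.of_le (mod_cast le_top)
  have hdiff : Differentiable ℝ Ai := hsm2.differentiable (by simp)
  have hsm' : ContDiff ℝ (⊤:ℕ∞) (deriv Ai) := (contDiff_infty_iff_deriv.mp hsm2).2
  have hd' : Differentiable ℝ (deriv Ai) := hsm'.differentiable (by simp)
  have hcd : Continuous (deriv Ai) := hsm'.continuous
  -- shifted integrability
  have hi_sh : ∀ c > (0:ℝ), Integrable fun y : ℝ => Real.exp (c * y) * Ai (β + y) := by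
    intro c hc
    have h1 := (hint c hc).comp_add_left β
    have h2 := h1.const_mul (Real.exp (-(c*β)))
    refine h2.congr (ae_of_all _ fun y => ?_)
    simp only [← mul_assoc, ← Real.exp_add]; ring_nf
  have hdAi : ∀ c > (0:ℝ), Integrable fun y : ℝ => Real.exp (c * y) * deriv Ai y :=
    airyAux_deriv_decay Ai hsmooth hODE hint
  have hd_sh : ∀ c > (0:ℝ), Integrable fun y : ℝ => Real.exp (c * y) * deriv Ai (β + y) := by
    intro c hc
    have h1 := (hdAi c hc).comp_add_left β
    have h2 := h1.const_mul (Real.exp (-(c*β)))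
    refine h2.congr (ae_of_all _ fun y => ?_)
    simp only [← mul_assoc, ← Real.exp_add]; ring_nf
  have habs_sh : ∀ c > (0:ℝ), Integrable fun y : ℝ => Real.exp (c * y) * |Ai (β + y)| := by
    intro c hc
    exact ((hi_sh c hc).abs).congr (ae_of_all _ fun y => by
      simp only [abs_mul, abs_of_pos (Real.exp_pos _)])
  have hpoly_sh : ∀ c > (0:ℝ), Integrable fun y : ℝ => |y| * (Real.exp (c * y) * |Ai (β + y)|) :=
    airyAux_poly' (fun y => Ai (β + y)) (by fun_prop) habs_sh
  -- differentiation under the integral sign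
  have key := hasDerivAt_integral_of_dominated_loc_of_deriv_le
    (μ := volume) (x₀ := w) (s := Metric.ball w (w/2)) (Metric.ball_mem_nhds _ (by positivity))
    (F := fun x y => Real.exp (x * y) * Ai (β + y))
    (F' := fun x y => Real.exp (x * y) * y * Ai (β + y))
    (bound := fun y => |y| * ((Real.exp ((w/2) * y) + Real.exp ((3*w/2) * y)) * |Ai (β + y)|))
    (Eventually.of_forall fun x => (Continuous.aestronglyMeasurable (by fun_prop)))
    (hi_sh w hw)
    (Continuous.aestronglyMeasurable (by fun_prop))
    (ae_of_all _ fun y x hx => ?_) ?_ (ae_of_all _ fun y x _ => ?_)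
  rotate_left
  · -- bound
    have hx1 : |x - w| < w/2 := by simpa [Real.dist_eq] using Metric.mem_ball.mp hx
    have h3 : Real.exp (x * y) ≤ Real.exp ((w/2) * y) + Real.exp ((3*w/2) * y) := by
      rcases le_or_gt 0 y with hy | hy
      · have : x * y ≤ (3*w/2) * y := by
          apply mul_le_mul_of_nonneg_right _ hy
          cases abs_lt.mp hx1; linarith
        have := Real.exp_le_exp.mpr this
        linarith [Real.exp_pos ((w/2) * y)]
      · have : x * y ≤ (w/2) * y := by
          have hxw : w/2 ≤ x := by cases abs_lt.mp hx1; linarith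
          nlinarith
        have := Real.exp_le_exp.mpr this
        linarith [Real.exp_pos ((3*w/2) * y)]
    have hrw : ‖Real.exp (x * y) * y * Ai (β + y)‖
        = |y| * (Real.exp (x * y) * |Ai (β + y)|) := by
      rw [Real.norm_eq_abs, abs_mul, abs_mul, abs_of_pos (Real.exp_pos _)]; ring
    rw [hrw]
    exact mul_le_mul_of_nonneg_left
      (mul_le_mul_of_nonneg_right h3 (abs_nonneg _)) (abs_nonneg y)
  · -- bound integrable
    refine (((hpoly_sh (w/2) (by positivity)).add (hpoly_sh (3*w/2) (by positivity))).congr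
      (ae_of_all _ fun y => by simp only [Pi.add_apply]; ring))
  · -- differentiability in x
    exact ((hasDerivAt_mul_const y).exp).mul_const (Ai (β + y))
  obtain ⟨-, hDer⟩ := key
  have hMfun : M = fun x => ∫ y : ℝ, Real.exp (x * y) * Ai (β + y) := funext hM
  subst hMfun
  -- integration by parts
  set A := ∫ y : ℝ, Real.exp (w * y) * Ai (β + y) with hA
  have hq : Integrable fun y : ℝ => Real.exp (w * y) * ((β + y) * Ai (β + y)) := by
    have hgint : Integrable fun y : ℝ =>
        |β| * (Real.exp (w * y) * |Ai (β + y)|) + |y| * (Real.exp (w * y) * |Ai (β + y)|) :=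
      ((habs_sh w hw).const_mul |β|).add (hpoly_sh w hw)
    refine hgint.mono' (Continuous.aestronglyMeasurable (by fun_prop)) (ae_of_all _ fun y => ?_)
    rw [Real.norm_eq_abs, abs_mul, abs_mul, abs_of_pos (Real.exp_pos _)]
    have h1 : |β + y| ≤ |β| + |y| := abs_add_le β y
    have h3 := mul_le_mul_of_nonneg_right h1
      (mul_nonneg (Real.exp_pos (w*y)).le (abs_nonneg (Ai (β+y))))
    calc Real.exp (w*y) * (|β + y| * |Ai (β+y)|)
        = |β + y| * (Real.exp (w*y) * |Ai (β+y)|) := by ring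
      _ ≤ (|β| + |y|) * (Real.exp (w*y) * |Ai (β+y)|) := h3
      _ = |β| * (Real.exp (w*y) * |Ai (β+y)|) + |y| * (Real.exp (w*y) * |Ai (β+y)|) := by ring
  have hdd_int : Integrable fun y : ℝ => Real.exp (w * y) * deriv (deriv Ai) (β + y) :=
    hq.congr (ae_of_all _ fun y => by simp only [hODE])
  -- IBP 2 (inner): ∫ e^{wy} Ai''(β+y) = -∫ (e^{wy} w) Ai'(β+y)
  have hu : ∀ x : ℝ, HasDerivAt (fun x : ℝ => Real.exp (w * x)) (Real.exp (w * x) * w) x :=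
    fun x => by simpa using ((hasDerivAt_id x).const_mul w).exp
  have hu'v2 : Integrable fun y : ℝ => (Real.exp (w * y) * w) * deriv Ai (β + y) :=
    ((hd_sh w hw).const_mul w).congr (ae_of_all _ fun y => by ring)
  have IBP2 : ∫ y : ℝ, Real.exp (w * y) * deriv (deriv Ai) (β + y)
      = -∫ y : ℝ, (Real.exp (w * y) * w) * deriv Ai (β + y) := by
    exact integral_mul_deriv_eq_deriv_mul_of_integrable (fun x _ => hu x)
      (fun y _ => ((hd' (β + y)).hasDerivAt).comp_const_add β y)
      hdd_int hu'v2 (hd_sh w hw)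
  have hu'v1 : Integrable fun y : ℝ => (Real.exp (w * y) * w) * Ai (β + y) :=
    ((hi_sh w hw).const_mul w).congr (ae_of_all _ fun y => by ring)
  have IBP1 : ∫ y : ℝ, Real.exp (w * y) * deriv Ai (β + y)
      = -∫ y : ℝ, (Real.exp (w * y) * w) * Ai (β + y) := by
    exact integral_mul_deriv_eq_deriv_mul_of_integrable (fun x _ => hu x)
      (fun y _ => ((hdiff (β + y)).hasDerivAt).comp_const_add β y)
      (hd_sh w hw) hu'v1 (hi_sh w hw)
  have pull1 : ∫ y : ℝ, (Real.exp (w * y) * w) * Ai (β + y) = w * A := by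
    rw [hA, ← integral_const_mul]
    congr 1; funext y; ring
  have pull2 : ∫ y : ℝ, (Real.exp (w * y) * w) * deriv Ai (β + y)
      = w * ∫ y : ℝ, Real.exp (w * y) * deriv Ai (β + y) := by
    rw [← integral_const_mul]
    congr 1; funext y; ring
  have hDD : ∫ y : ℝ, Real.exp (w * y) * deriv (deriv Ai) (β + y) = w^2 * A := by
    rw [IBP2, pull2, IBP1, pull1]; ring
  -- final integral identity
  have hfinal : ∫ y : ℝ, Real.exp (w * y) * y * Ai (β + y) = (w^2 - β) * A := by
    have hsplit : ∀ y : ℝ, Real.exp (w * y) * y * Ai (β + y)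
        = Real.exp (w * y) * ((β + y) * Ai (β + y)) - β * (Real.exp (w * y) * Ai (β + y)) := by
      intro y; ring
    rw [show (fun y : ℝ => Real.exp (w * y) * y * Ai (β + y))
        = fun y : ℝ => Real.exp (w * y) * ((β + y) * Ai (β + y))
          - β * (Real.exp (w * y) * Ai (β + y)) from funext hsplit]
    rw [integral_sub hq ((hi_sh w hw).const_mul β), integral_const_mul]
    have h2 : ∫ y : ℝ, Real.exp (w * y) * ((β + y) * Ai (β + y)) = w^2 * A := by
      rw [← hDD]
      exact integral_congr_ae (ae_of_all _ fun y => by simp only [hODE])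
    rw [h2, ← hA]; ring
  simpa [hfinal] using hDer
end

section
/- Let K be a self-adjoint orthogonal projection operator on L²(ℝ₊) whose range consists of functions of the form p(x) e^{−x/2} with p a polynomial of degree < n. Let P_u be multiplication by 1_{[u,∞)} for u > 0. Then the operator norm of P_u K P_u is strictly less than 1. -/
/-!
The range of `K` lies in the finite-dimensional space `V` of `L²` classes of `p(x) e^{-x/2}`
with `deg p < n`. A nonzero element of `V` vanishes only at finitely many points, so it has
mass on `(0, u)` and, by Pythagoras, `‖P_u g‖ < ‖g‖` for every nonzero `g ∈ V`. Compactness of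
the unit ball of `V` upgrades this to `‖P_u|_V‖ < 1`, and `‖P_u K P_u‖ ≤ ‖P_u|_V‖` because
`‖K‖ ≤ 1` (a self-adjoint projection) and `‖P_u‖ ≤ 1`.
-/

open MeasureTheory Real

theorem ContinuousLinearMap.opNorm_lt_one_of_norm_apply_lt {𝕜 E F : Type*} [RCLike 𝕜]
    [NormedAddCommGroup E] [NormedSpace 𝕜 E] [FiniteDimensional 𝕜 E]
    [SeminormedAddCommGroup F] [NormedSpace 𝕜 F] (T : E →L[𝕜] F)
    (hT : ∀ x, x ≠ 0 → ‖T x‖ < ‖x‖) : ‖T‖ < 1 := by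
  have := FiniteDimensional.proper_rclike 𝕜 E
  obtain ⟨x₀, hx₀, hmax⟩ := (isCompact_closedBall (0 : E) 1).exists_isMaxOn
    ⟨0, Metric.mem_closedBall_self zero_le_one⟩ (continuous_norm.comp T.continuous).continuousOn
  have hx₀ : ‖x₀‖ ≤ 1 := by simpa using hx₀
  have hmax_lt : ‖T x₀‖ < 1 := by
    rcases eq_or_ne x₀ 0 with rfl | hne
    · simp
    · exact (hT x₀ hne).trans_le hx₀
  refine (T.opNorm_le_of_unit_norm (norm_nonneg _) fun x hx => ?_).trans_lt hmax_lt
  exact hmax (by simp [hx])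

theorem MeasureTheory.Lp.norm_lt_norm_of_ae_eq_indicator {α 𝕜 E : Type*} [MeasurableSpace α]
    {μ : Measure α} [RCLike 𝕜] [NormedAddCommGroup E] [InnerProductSpace 𝕜 E]
    {s : Set α} {g h : Lp E 2 μ} (hh : h =ᵐ[μ] s.indicator g)
    (hg : ∃ᵐ x ∂μ, x ∉ s ∧ g x ≠ 0) : ‖h‖ < ‖g‖ := by
  have horth : inner 𝕜 h (g - h) = 0 := by
    rw [L2.inner_def]
    refine integral_eq_zero_of_ae ?_
    filter_upwards [hh, Lp.coeFn_sub g h] with x hx hsub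
    rw [hsub, Pi.sub_apply, hx]
    by_cases hxs : x ∈ s <;> simp [hxs]
  have hne : g - h ≠ 0 := by
    rw [sub_ne_zero]
    rintro rfl
    obtain ⟨x, ⟨hxs, hx⟩, hxh⟩ := (hg.and_eventually hh).exists
    exact hx (by simpa [hxs] using hxh)
  have hpyth : ‖g‖ * ‖g‖ = ‖h‖ * ‖h‖ + ‖g - h‖ * ‖g - h‖ := by
    simpa using norm_add_sq_eq_norm_sq_add_norm_sq_of_inner_eq_zero h (g - h) horth
  have hpos := norm_pos_iff.2 hne
  exact (mul_self_lt_mul_self_iff (norm_nonneg h) (norm_nonneg g)).2 (by nlinarith)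

theorem Polynomial.ae_eval_ne_zero {μ : Measure ℝ} [NullSingletonClass μ] {p : Polynomial ℝ}
    (hp : p ≠ 0) : ∀ᵐ x ∂μ, p.eval x ≠ 0 :=
  measure_eq_zero_iff_ae_notMem.1 ((Polynomial.finite_setOfPred_isRoot hp).measure_zero μ)

def MeasureTheory.Lp.toAEEqFunLinearMap {α 𝕜 E : Type*} [MeasurableSpace α] [NormedField 𝕜]
    [NormedAddCommGroup E] [NormedSpace 𝕜 E] (p : ENNReal) (μ : Measure α) :
    Lp E p μ →ₗ[𝕜] α →ₘ[μ] E where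
  toFun f := f
  map_add' _ _ := rfl
  map_smul' _ _ := rfl

noncomputable def polyExpAEEqFun (μ : Measure ℝ) : Polynomial ℝ →ₗ[ℝ] ℝ →ₘ[μ] ℝ :=
  ContinuousMap.toAEEqFunLinearMap μ ∘ₗ
    LinearMap.mulRight ℝ (⟨fun x => exp (-x / 2), by fun_prop⟩ : C(ℝ, ℝ)) ∘ₗ
    Polynomial.toContinuousMapAlgHom.toLinearMap

/-- The span of the first `n` Laguerre functions `p(x) e^{-x/2}`, `deg p < n`, inside `L²(μ)`. -/
noncomputable def polyExpSubspace (μ : Measure ℝ) (n : ℕ) : Submodule ℝ (Lp ℝ 2 μ) :=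
  ((Polynomial.degreeLT ℝ n).map (polyExpAEEqFun μ)).comap (Lp.toAEEqFunLinearMap (𝕜 := ℝ) 2 μ)

section polyExpSubspace

variable {μ : Measure ℝ} {n : ℕ}

theorem mem_polyExpSubspace {g : Lp ℝ 2 μ} :
    g ∈ polyExpSubspace μ n ↔ ∃ p : Polynomial ℝ, p.degree < n ∧
      (g : ℝ → ℝ) =ᵐ[μ] fun x => p.eval x * exp (-x / 2) := by
  rw [polyExpSubspace, Submodule.mem_comap, Submodule.mem_map]
  refine exists_congr fun p => and_congr Polynomial.mem_degreeLT ?_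
  rw [AEEqFun.ext_iff, Filter.eventuallyEq_comm]
  exact (ContinuousMap.coeFn_toAEEqFun μ _).congr_right

instance : FiniteDimensional ℝ (polyExpSubspace μ n) := by
  have : FiniteDimensional ℝ (Polynomial.degreeLT ℝ n) :=
    (Polynomial.degreeLTEquiv ℝ n).symm.finiteDimensional
  let ι := Lp.toAEEqFunLinearMap (𝕜 := ℝ) (E := ℝ) 2 μ
  have : FiniteDimensional ℝ ((polyExpSubspace μ n).map ι) :=
    Submodule.finiteDimensional_of_le (Submodule.map_comap_le _ _)
  exact (Submodule.equivMapOfInjective ι Subtype.val_injective _).symm.finiteDimensional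

theorem ae_ne_zero_of_mem_polyExpSubspace [NullSingletonClass μ] {g : Lp ℝ 2 μ}
    (hg : g ∈ polyExpSubspace μ n) (hg0 : g ≠ 0) : ∀ᵐ x ∂μ, g x ≠ 0 := by
  obtain ⟨p, -, hgp⟩ := mem_polyExpSubspace.1 hg
  have hp0 : p ≠ 0 := by
    rintro rfl
    exact hg0 (Lp.eq_zero_iff_ae_eq_zero.2 (by simpa [Pi.zero_def] using hgp))
  filter_upwards [hgp, Polynomial.ae_eval_ne_zero hp0] with x hx hpx
  rw [hx]
  exact mul_ne_zero hpx (exp_ne_zero _)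

theorem norm_lt_norm_of_mem_polyExpSubspace [NullSingletonClass μ] {s : Set ℝ} (hs : μ sᶜ ≠ 0)
    {g h : Lp ℝ 2 μ} (hg : g ∈ polyExpSubspace μ n) (hg0 : g ≠ 0)
    (hh : h =ᵐ[μ] s.indicator g) : ‖h‖ < ‖g‖ :=
  Lp.norm_lt_norm_of_ae_eq_indicator (𝕜 := ℝ) hh
    ((frequently_ae_iff.2 hs).and_eventually (ae_ne_zero_of_mem_polyExpSubspace hg hg0))

end polyExpSubspace

/-- Let `K` be a self-adjoint orthogonal projection on `L²(ℝ₊)`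
whose range consists of functions `p(x) e^{−x/2}` with `p` a polynomial of
degree `< n`, and let `P_u` be multiplication by `1_{[u,∞)}` with `u > 0`.
Then `‖P_u K P_u‖ < 1`. -/
theorem norm_PKP_lt_one
    (n : ℕ) (u : ℝ) (hu : 0 < u)
    (K P : Lp ℝ 2 (volume.restrict (Set.Ioi (0 : ℝ))) →L[ℝ]
           Lp ℝ 2 (volume.restrict (Set.Ioi (0 : ℝ))))
    (hKsa : IsSelfAdjoint K)
    (hKproj : K ∘L K = K)
    (hrange : ∀ f, ∃ p : Polynomial ℝ, p.degree < n ∧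
      (K f : ℝ → ℝ) =ᵐ[volume.restrict (Set.Ioi (0 : ℝ))]
        fun x => p.eval x * Real.exp (-x / 2))
    (hP : ∀ f, (P f : ℝ → ℝ) =ᵐ[volume.restrict (Set.Ioi (0 : ℝ))]
        Set.indicator (Set.Ici u) (f : ℝ → ℝ)) :
    ‖P ∘L K ∘L P‖ < 1 := by
  set V := polyExpSubspace (volume.restrict (Set.Ioi (0 : ℝ))) n
  have hKV : ∀ f, K f ∈ V := fun f => mem_polyExpSubspace.2 (hrange f)
  have hK : ∀ f, ‖K f‖ ≤ ‖f‖ := by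
    simpa using K.le_of_opNorm_le (IsStarProjection.norm_le K ⟨hKproj, hKsa⟩)
  have hP_le : ∀ f, ‖P f‖ ≤ ‖f‖ := fun f => Lp.norm_le_norm_of_ae_le <| by
    filter_upwards [hP f] with x hx
    rw [hx]
    exact norm_indicator_le_norm_self _ _
  have hmass : volume.restrict (Set.Ioi (0 : ℝ)) (Set.Ici u)ᶜ ≠ 0 := by
    rw [Measure.restrict_apply' measurableSet_Ioi, Set.compl_Ici, Set.Iio_inter_Ioi]
    simp [hu]
  have hPV : ‖P ∘L V.subtypeL‖ < 1 :=
    (P ∘L V.subtypeL).opNorm_lt_one_of_norm_apply_lt fun v hv =>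
      norm_lt_norm_of_mem_polyExpSubspace hmass v.2 (by simpa using hv) (hP v)
  refine lt_of_le_of_lt (ContinuousLinearMap.opNorm_le_bound _ (norm_nonneg (P ∘L V.subtypeL))
    fun f => ?_) hPV
  calc ‖(P ∘L K ∘L P) f‖ = ‖(P ∘L V.subtypeL) ⟨K (P f), hKV (P f)⟩‖ := rfl
    _ ≤ ‖P ∘L V.subtypeL‖ * ‖K (P f)‖ := (P ∘L V.subtypeL).le_opNorm _
    _ ≤ ‖P ∘L V.subtypeL‖ * ‖f‖ := by gcongr; exact (hK _).trans (hP_le f)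
end

section
/- Let ρ ∈ (0,1) and f_∞(z) = −z/ρ² + log(z+ρ) − ((1−ρ)²/ρ²) log(1−ρ−z). Along the ray z = t e^{−iπ/3}, t ∈ (0, 2(1−ρ)], the derivative of Re f_∞ with respect to t equals −t²(2ρ(1−ρ) + t(1−2ρ) + t²) / [2ρ²(ρ² + ρt + t²)((1−ρ−t)² + t(1−ρ))], and this is strictly negative; hence Re f_∞ is strictly decreasing along the ray. -/
/-!
On the ray `z = t e^{-iπ/3}` one has `|z + ρ|² = ρ² + ρt + t²` and
`|1 - ρ - z|² = (1-ρ)² - (1-ρ)t + t²`, so `Re f_∞` is an explicit real function of `t` whose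
derivative is a rational function. Its numerator `2ρ(1-ρ) + t(1-2ρ) + t²` equals
`ρ(2(1-ρ) - t) + t(1-ρ) + t²`, which is positive for `0 < t ≤ 2(1-ρ)`.
-/

open Complex Set

/-- `t ↦ Re f_∞(t e^{-iπ/3})`, see `re_fInfty_ray_eq`. -/
noncomputable def reFInftyRay (ρ t : ℝ) : ℝ :=
  -t / (2 * ρ ^ 2) + (1 / 2) * Real.log (ρ ^ 2 + ρ * t + t ^ 2)
    - ((1 - ρ) ^ 2 / (2 * ρ ^ 2)) * Real.log ((1 - ρ) ^ 2 - (1 - ρ) * t + t ^ 2)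

namespace Complex

lemma log_re_eq_half_log_normSq (z : ℂ) : (log z).re = Real.log (normSq z) / 2 := by
  rw [log_re, normSq_eq_norm_sq, Real.log_pow]
  ring

lemma neg_ofReal_mul_I_eq (x : ℝ) : (-(x : ℂ) * I) = ((-x : ℝ) : ℂ) * I := by
  push_cast
  ring

lemma exp_neg_pi_div_three_mul_I_re : (exp (-(Real.pi / 3 : ℝ) * I)).re = 1 / 2 := by
  rw [neg_ofReal_mul_I_eq, exp_ofReal_mul_I_re, Real.cos_neg, Real.cos_pi_div_three]

lemma exp_neg_pi_div_three_mul_I_im :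
    (exp (-(Real.pi / 3 : ℝ) * I)).im = -(Real.sqrt 3 / 2) := by
  rw [neg_ofReal_mul_I_eq, exp_ofReal_mul_I_im, Real.sin_neg, Real.sin_pi_div_three]

lemma normSq_ofReal_add_mul_exp_neg_pi_div_three_mul_I (a s : ℝ) :
    normSq (a + s * exp (-(Real.pi / 3 : ℝ) * I)) = a ^ 2 + a * s + s ^ 2 := by
  rw [normSq_apply, add_re, add_im, ofReal_re, ofReal_im, re_ofReal_mul, im_ofReal_mul,
    exp_neg_pi_div_three_mul_I_re, exp_neg_pi_div_three_mul_I_im]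
  nlinarith [Real.sq_sqrt (show (0 : ℝ) ≤ 3 by norm_num)]

end Complex

open Complex in
lemma re_fInfty_ray_eq (ρ t : ℝ) :
    (-(t * exp (-(Real.pi / 3 : ℝ) * I)) / (ρ : ℂ) ^ 2 + log (t * exp (-(Real.pi / 3 : ℝ) * I) + ρ)
      - (((1 : ℂ) - ρ) ^ 2 / (ρ : ℂ) ^ 2) * log (1 - ρ - t * exp (-(Real.pi / 3 : ℝ) * I))).re
      = reFInftyRay ρ t := by
  have hlin : (-(t * exp (-(Real.pi / 3 : ℝ) * I)) / (ρ : ℂ) ^ 2).re = -t / (2 * ρ ^ 2) := by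
    rw [show (ρ : ℂ) ^ 2 = ((ρ ^ 2 : ℝ) : ℂ) by push_cast; ring, div_ofReal_re, neg_re,
      re_ofReal_mul, exp_neg_pi_div_three_mul_I_re]
    ring
  have hcoef : ((1 : ℂ) - ρ) ^ 2 / (ρ : ℂ) ^ 2 = (((1 - ρ) ^ 2 / ρ ^ 2 : ℝ) : ℂ) := by
    push_cast
    ring
  have hplus : (t * exp (-(Real.pi / 3 : ℝ) * I) + ρ : ℂ)
      = (ρ : ℂ) + t * exp (-(Real.pi / 3 : ℝ) * I) := add_comm _ _
  have hminus : (1 - ρ - t * exp (-(Real.pi / 3 : ℝ) * I) : ℂ)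
      = ((1 - ρ : ℝ) : ℂ) + ((-t : ℝ) : ℂ) * exp (-(Real.pi / 3 : ℝ) * I) := by
    push_cast
    ring
  rw [sub_re, add_re, hcoef, re_ofReal_mul, hlin, hplus, hminus, log_re_eq_half_log_normSq,
    log_re_eq_half_log_normSq, normSq_ofReal_add_mul_exp_neg_pi_div_three_mul_I,
    normSq_ofReal_add_mul_exp_neg_pi_div_three_mul_I, reFInftyRay,
    show (1 - ρ) ^ 2 + (1 - ρ) * -t + (-t) ^ 2 = (1 - ρ) ^ 2 - (1 - ρ) * t + t ^ 2 by ring]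
  ring

lemma sq_add_mul_add_sq_pos {a s : ℝ} (ha : a ≠ 0) : 0 < a ^ 2 + a * s + s ^ 2 := by
  nlinarith [sq_nonneg (a + 2 * s), sq_pos_of_ne_zero ha]

lemma hasDerivAt_reFInftyRay {ρ : ℝ} (hρ0 : ρ ≠ 0) (hρ1 : ρ ≠ 1) (t : ℝ) :
    HasDerivAt (reFInftyRay ρ)
      (-(t ^ 2 * (2 * ρ * (1 - ρ) + t * (1 - 2 * ρ) + t ^ 2)) /
        (2 * ρ ^ 2 * (ρ ^ 2 + ρ * t + t ^ 2) * ((1 - ρ - t) ^ 2 + t * (1 - ρ)))) t := by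
  have hA : 0 < ρ ^ 2 + ρ * t + t ^ 2 := sq_add_mul_add_sq_pos hρ0
  have hB : 0 < (1 - ρ) ^ 2 - (1 - ρ) * t + t ^ 2 := by
    have := sq_add_mul_add_sq_pos (s := -t) (sub_ne_zero.2 hρ1.symm)
    linarith [show (1 - ρ) ^ 2 + (1 - ρ) * -t + (-t) ^ 2 = (1 - ρ) ^ 2 - (1 - ρ) * t + t ^ 2 by ring]
  have hlin : HasDerivAt (fun s : ℝ => -s / (2 * ρ ^ 2)) (-1 / (2 * ρ ^ 2)) t :=
    (hasDerivAt_neg t).div_const _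
  have hA' : HasDerivAt (fun s : ℝ => ρ ^ 2 + ρ * s + s ^ 2) (ρ + 2 * t) t :=
    (((hasDerivAt_id t).const_mul ρ).const_add (ρ ^ 2) |>.add (hasDerivAt_pow 2 t)).congr_deriv
      (by norm_num)
  have hB' : HasDerivAt (fun s : ℝ => (1 - ρ) ^ 2 - (1 - ρ) * s + s ^ 2) (2 * t - (1 - ρ)) t :=
    (((hasDerivAt_id t).const_mul (1 - ρ)).const_sub ((1 - ρ) ^ 2) |>.add
      (hasDerivAt_pow 2 t)).congr_deriv (by norm_num; ring)
  have hD := (hlin.add ((hA'.log hA.ne').const_mul (1 / 2))).sub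
    ((hB'.log hB.ne').const_mul ((1 - ρ) ^ 2 / (2 * ρ ^ 2)))
  refine hD.congr_deriv ?_
  rw [show (1 - ρ - t) ^ 2 + t * (1 - ρ) = (1 - ρ) ^ 2 - (1 - ρ) * t + t ^ 2 by ring]
  generalize hA_def : ρ ^ 2 + ρ * t + t ^ 2 = A at hA ⊢
  generalize hB_def : (1 - ρ) ^ 2 - (1 - ρ) * t + t ^ 2 = B at hB ⊢
  field_simp
  rw [← hA_def, ← hB_def]
  ring

lemma reFInftyRay_deriv_numerator_pos {ρ t : ℝ} (hρ0 : 0 < ρ) (hρ1 : ρ < 1) (ht0 : 0 < t)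
    (ht : t ≤ 2 * (1 - ρ)) : 0 < 2 * ρ * (1 - ρ) + t * (1 - 2 * ρ) + t ^ 2 := by
  rw [show 2 * ρ * (1 - ρ) + t * (1 - 2 * ρ) + t ^ 2
      = ρ * (2 * (1 - ρ) - t) + t * (1 - ρ) + t ^ 2 by ring]
  linarith [mul_nonneg hρ0.le (sub_nonneg.2 ht), mul_pos ht0 (sub_pos.2 hρ1), sq_nonneg t]

/-- Let `ρ ∈ (0,1)` and
`f_∞(z) = −z/ρ² + log(z+ρ) − ((1−ρ)²/ρ²) log(1−ρ−z)`. Along the ray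
`z = t e^{−iπ/3}`, `t ∈ (0, 2(1−ρ)]`, the derivative of `Re f_∞` in `t` equals
`−t²(2ρ(1−ρ) + t(1−2ρ) + t²) / [2ρ²(ρ² + ρt + t²)((1−ρ−t)² + t(1−ρ))]`,
which is strictly negative; hence `Re f_∞` is strictly decreasing on the ray. -/
theorem finfty_steep_descent_ray (ρ : ℝ) (h0 : 0 < ρ) (h1 : ρ < 1)
    (f : ℂ → ℂ)
    (hf : ∀ z : ℂ, f z = -z / (ρ : ℂ) ^ 2 + Complex.log (z + ρ)
      - (((1 : ℂ) - ρ) ^ 2 / (ρ : ℂ) ^ 2) * Complex.log (1 - ρ - z))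
    (g : ℝ → ℝ)
    (hg : ∀ t : ℝ, g t = (f (t * Complex.exp (-(Real.pi / 3 : ℝ) * Complex.I))).re) :
    (∀ t ∈ Ioc (0 : ℝ) (2 * (1 - ρ)),
      deriv g t
        = -(t ^ 2 * (2 * ρ * (1 - ρ) + t * (1 - 2 * ρ) + t ^ 2)) /
            (2 * ρ ^ 2 * (ρ ^ 2 + ρ * t + t ^ 2) * ((1 - ρ - t) ^ 2 + t * (1 - ρ)))
        ∧ deriv g t < 0) ∧
    StrictAntiOn g (Ioc (0 : ℝ) (2 * (1 - ρ))) := by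
  have hg_eq : g = reFInftyRay ρ := funext fun t => by rw [hg, hf, re_fInfty_ray_eq]
  subst hg_eq
  have hderiv := hasDerivAt_reFInftyRay h0.ne' h1.ne
  have hneg : ∀ t ∈ Ioc (0 : ℝ) (2 * (1 - ρ)), deriv (reFInftyRay ρ) t < 0 := by
    rintro t ⟨ht0, ht⟩
    rw [(hderiv t).deriv, neg_div]
    have hnum := reFInftyRay_deriv_numerator_pos h0 h1 ht0 ht
    have hcross := mul_pos ht0 (sub_pos.2 h1)
    exact neg_neg_of_pos (by positivity)
  refine ⟨fun t ht => ⟨(hderiv t).deriv, hneg t ht⟩, ?_⟩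
  refine strictAntiOn_of_deriv_neg (convex_Ioc _ _)
    (fun t _ => (hderiv t).continuousAt.continuousWithinAt) fun t ht => ?_
  exact hneg t (Ioo_subset_Ioc_self (by rwa [interior_Ioc] at ht))
end
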